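/- Fix n ≥ 2, α ∈ (0,n), and r > 0. First, the Riesz potential of the ball B_r(0) evaluated at the center satisfies v_{B_r(0)}(0) = (n ω_n / (n−α)) · r^{n−α}. Second, for every Lebesgue measurable set E ⊂ ℝⁿ with |E| = ω_n rⁿ and every x ∈ ℝⁿ, one has v_E(x) ≤ (n ω_n / (n−α)) · r^{n−α}. -/

import Mathlib

open MeasureTheory Metric Set Bornology

/-- The Riesz potential `v_E(x) = ∫_E |x-y|^{-α} dy` of a set `E ⊆ ℝⁿ`. -/
noncomputable def rieszPotential {n : ℕ} (α : ℝ) (E : Set (EuclideanSpace ℝ (Fin n)))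
    (x : EuclideanSpace ℝ (Fin n)) : ℝ :=
  ∫ y in E, ‖x - y‖ ^ (-α)

/-- `ω_k`: the Lebesgue measure of the unit ball in `ℝ^k`. -/
noncomputable def unitBallVol (k : ℕ) : ℝ :=
  (volume (ball (0 : EuclideanSpace ℝ (Fin k)) 1)).toReal

/-!
The kernel `y ↦ ‖x - y‖ ^ (-α)` is radially decreasing about `x`. If `μ E = μ B` for the ball
`B = B_r(x)`, then `E \ B` and `B \ E` have equal measure, and the kernel is `≤ r ^ (-α)` on the
first and `≥ r ^ (-α)` on the second; exchanging them can only increase the integral, so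
`v_E(x) ≤ v_B(x)`. The value `v_B(x) = v_{B_r(0)}(0)` is computed in polar coordinates.
-/

open Module

theorem integral_Ioo_pow_mul_rpow_neg {d : ℕ} {α r : ℝ} (hd : 1 ≤ d) (hα : α < d) (hr : 0 ≤ r) :
    ∫ y in Ioo 0 r, y ^ (d - 1) * y ^ (-α) = r ^ ((d : ℝ) - α) / ((d : ℝ) - α) := by
  have hexp : ((d - 1 : ℕ) : ℝ) + -α = (d : ℝ) - α - 1 := by
    rw [Nat.cast_sub hd]; ring
  calc ∫ y in Ioo 0 r, y ^ (d - 1) * y ^ (-α)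
      = ∫ y in Ioo 0 r, y ^ ((d : ℝ) - α - 1) :=
        setIntegral_congr_fun measurableSet_Ioo fun y hy => by
          rw [← Real.rpow_natCast, ← Real.rpow_add hy.1, hexp]
    _ = ∫ y in (0 : ℝ)..r, y ^ ((d : ℝ) - α - 1) := by
        rw [intervalIntegral.integral_of_le hr, integral_Ioc_eq_integral_Ioo]
    _ = r ^ ((d : ℝ) - α) / ((d : ℝ) - α) := by
        rw [integral_rpow (Or.inl (by linarith)), sub_add_cancel,
          Real.zero_rpow (by linarith), sub_zero]

theorem setIntegral_le_setIntegral_of_measure_eq {X : Type*} [MeasurableSpace X]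
    {μ : Measure X} {s t : Set X} {g : X → ℝ} (c : ℝ) (hs : MeasurableSet s)
    (ht : MeasurableSet t) (hμ : μ s = μ t) (hμt : μ t ≠ ⊤) (hg₀ : 0 ≤ g)
    (hgt : IntegrableOn g t μ) (hle : ∀ y ∈ s \ t, g y ≤ c)
    (hge : ∀ᵐ y ∂μ, y ∈ t \ s → c ≤ g y) :
    ∫ y in s, g y ∂μ ≤ ∫ y in t, g y ∂μ := by
  by_cases hgs : IntegrableOn g s μ
  swap
  · rw [integral_undef hgs]
    exact setIntegral_nonneg ht fun y _ => hg₀ y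
  have hdiff : μ (s \ t) = μ (t \ s) :=
    measure_sdiff_symm hs.nullMeasurableSet ht.nullMeasurableSet hμ
      (ne_top_of_le_ne_top hμt (measure_mono inter_subset_right))
  have hts : μ (t \ s) ≠ ⊤ := ne_top_of_le_ne_top hμt (measure_mono sdiff_subset)
  calc ∫ y in s, g y ∂μ = ∫ y in s ∩ t, g y ∂μ + ∫ y in s \ t, g y ∂μ :=
        (integral_inter_add_sdiff ht hgs).symm
    _ ≤ ∫ y in s ∩ t, g y ∂μ + ∫ _ in s \ t, c ∂μ :=
        add_le_add le_rfl (setIntegral_mono_on (hgs.mono_set sdiff_subset)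
          (integrableOn_const (hdiff ▸ hts)) (hs.diff ht) hle)
    _ = ∫ y in t ∩ s, g y ∂μ + ∫ _ in t \ s, c ∂μ := by
        rw [inter_comm, setIntegral_const, setIntegral_const, measureReal_def,
          measureReal_def, hdiff]
    _ ≤ ∫ y in t ∩ s, g y ∂μ + ∫ y in t \ s, g y ∂μ :=
        add_le_add le_rfl (setIntegral_mono_on_ae (integrableOn_const hts)
          (hgt.mono_set sdiff_subset) (ht.diff hs) hge)
    _ = ∫ y in t, g y ∂μ := integral_inter_add_sdiff hs hgt

theorem preimage_sub_left_ball_zero {E : Type*} [SeminormedAddCommGroup E] (x : E) (r : ℝ) :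
    (x - ·) ⁻¹' ball 0 r = ball x r := by
  ext y
  simp [dist_eq_norm, norm_sub_rev]

section RadialKernel

variable {E : Type*} [NormedAddCommGroup E] [NormedSpace ℝ E] [FiniteDimensional ℝ E]
  [MeasurableSpace E] [BorelSpace E] (μ : Measure E) [μ.IsAddHaarMeasure]

theorem setIntegral_ball_comp_sub_left {F : Type*} [NormedAddCommGroup F] [NormedSpace ℝ F]
    (f : E → F) (x : E) (r : ℝ) :
    ∫ y in ball x r, f (x - y) ∂μ = ∫ y in ball 0 r, f y ∂μ := by
  rw [← preimage_sub_left_ball_zero]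
  exact (μ.measurePreserving_sub_left x).setIntegral_preimage_emb
    (Homeomorph.subLeft x).measurableEmbedding f _

theorem integrableOn_ball_comp_sub_left {F : Type*} [NormedAddCommGroup F]
    {f : E → F} {r : ℝ} (x : E) (hf : IntegrableOn f (ball 0 r) μ) :
    IntegrableOn (fun y => f (x - y)) (ball x r) μ := by
  rw [← preimage_sub_left_ball_zero]
  exact ((μ.measurePreserving_sub_left x).integrableOn_comp_preimage
    (Homeomorph.subLeft x).measurableEmbedding).2 hf

variable [Nontrivial E] {α : ℝ}

theorem integral_ball_zero_norm_rpow_neg (hα : α < finrank ℝ E) {r : ℝ} (hr : 0 ≤ r) :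
    ∫ y in ball (0 : E) r, ‖y‖ ^ (-α) ∂μ
      = finrank ℝ E * μ.real (ball 0 1) / (finrank ℝ E - α) * r ^ ((finrank ℝ E : ℝ) - α) := by
  have hball : (ball (0 : E) r).indicator (fun y => ‖y‖ ^ (-α))
      = fun y => (Iio r).indicator (fun t => t ^ (-α)) ‖y‖ := by
    ext y
    by_cases hy : ‖y‖ < r <;> simp [hy]
  have hline : (fun t : ℝ => t ^ (finrank ℝ E - 1) • (Iio r).indicator (fun t => t ^ (-α)) t)
      = (Iio r).indicator fun t => t ^ (finrank ℝ E - 1) * t ^ (-α) := by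
    ext t
    simp [indicator_apply]
  rw [← integral_indicator measurableSet_ball, hball, integral_fun_norm_addHaar, hline,
    setIntegral_indicator measurableSet_Iio, Ioi_inter_Iio,
    integral_Ioo_pow_mul_rpow_neg finrank_pos hα hr, nsmul_eq_mul, smul_eq_mul]
  ring

theorem integrableOn_ball_zero_norm_rpow_neg (hα : α < finrank ℝ E) (r : ℝ) :
    IntegrableOn (fun y : E => ‖y‖ ^ (-α)) (ball 0 r) μ :=
  integrableOn_ball_of_norm_le_rpow (C := 1) finrank_pos hα
    (ae_of_all _ fun y => by simp [abs_of_nonneg (Real.rpow_nonneg (norm_nonneg y) _)])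
    (measurable_norm.pow_const _).aestronglyMeasurable

theorem setIntegral_norm_sub_rpow_neg_le_ball (hα₀ : 0 ≤ α) (hα : α < finrank ℝ E)
    {r : ℝ} (hr : 0 < r) {s : Set E} (hs : MeasurableSet s) {x : E}
    (hμs : μ s = μ (ball x r)) :
    ∫ y in s, ‖x - y‖ ^ (-α) ∂μ ≤ ∫ y in ball x r, ‖x - y‖ ^ (-α) ∂μ := by
  refine setIntegral_le_setIntegral_of_measure_eq (r ^ (-α)) hs measurableSet_ball hμs
    measure_ball_lt_top.ne (fun y => Real.rpow_nonneg (norm_nonneg _) _)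
    (integrableOn_ball_comp_sub_left μ x (integrableOn_ball_zero_norm_rpow_neg μ hα r)) ?_ ?_
  · rintro y ⟨-, hy⟩
    refine Real.rpow_le_rpow_of_nonpos hr ?_ (neg_nonpos.2 hα₀)
    simpa [dist_eq_norm, norm_sub_rev] using hy
  · filter_upwards [μ.ae_ne x] with y hyx hy
    refine Real.rpow_le_rpow_of_nonpos (norm_pos_iff.2 (sub_ne_zero.2 hyx.symm)) ?_
      (neg_nonpos.2 hα₀)
    simpa [dist_eq_norm, norm_sub_rev] using (mem_ball.1 hy.1).le

end RadialKernel

/-- The Riesz potential of the ball `B_r(0)` at its center equals `(n ω_n/(n−α)) r^{n−α}`, and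
for every measurable set `E` of measure `ω_n rⁿ` the Riesz potential is everywhere bounded by
this value. -/
theorem rieszPotential_ball_center_and_sup_bound
    (n : ℕ) (hn : 2 ≤ n) (α : ℝ) (hα₀ : 0 < α) (hα₁ : α < n) (r : ℝ) (hr : 0 < r) :
    rieszPotential α (ball (0 : EuclideanSpace ℝ (Fin n)) r) 0
        = (n * unitBallVol n / ((n : ℝ) - α)) * r ^ ((n : ℝ) - α) ∧
    ∀ E : Set (EuclideanSpace ℝ (Fin n)), MeasurableSet E →
      volume E = ENNReal.ofReal (unitBallVol n * r ^ n) →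
      ∀ x : EuclideanSpace ℝ (Fin n),
        rieszPotential α E x ≤ (n * unitBallVol n / ((n : ℝ) - α)) * r ^ ((n : ℝ) - α) := by
  have : Nonempty (Fin n) := ⟨⟨0, by omega⟩⟩
  have hd : finrank ℝ (EuclideanSpace ℝ (Fin n)) = n := finrank_euclideanSpace_fin
  have hα : α < finrank ℝ (EuclideanSpace ℝ (Fin n)) := by rw [hd]; exact hα₁
  have hball (x : EuclideanSpace ℝ (Fin n)) :
      rieszPotential α (ball x r) x = (n * unitBallVol n / ((n : ℝ) - α)) * r ^ ((n : ℝ) - α) := by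
    rw [rieszPotential, setIntegral_ball_comp_sub_left volume (‖·‖ ^ (-α)),
      integral_ball_zero_norm_rpow_neg volume hα hr.le, hd]
    rfl
  refine ⟨hball 0, fun E hE hvol x => ?_⟩
  have hvol' : volume E = volume (ball x r) := by
    rw [hvol, Measure.addHaar_ball volume x hr.le, hd, mul_comm (unitBallVol n),
      ENNReal.ofReal_mul (by positivity), unitBallVol,
      ENNReal.ofReal_toReal measure_ball_lt_top.ne]
  exact (setIntegral_norm_sub_rpow_neg_le_ball volume hα₀.le hα hr hE hvol').trans (hball x).le
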